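/- arXiv:1601.03258 — 4 statements merged into one kernel-verified Lean document; each statement's English description precedes it below -/
import Mathlib

section
/- Let q : ℝ → ℂ be continuous with ∫_ℝ (1+|x|)|q(x)| dx < ∞, and let k be a nonzero real number. Then there exists a unique bounded continuous function f : ℝ → ℂ satisfying the Volterra integral equation f(x) = e^{−ikx} + ∫_{−∞}^x (sin(k(x−t))/k) · q(t) · f(t) dt for all x ∈ ℝ (the left Jost solution f₋(k,·)). -/
/-!
The Jost solution is the fixed point of the affine Volterra map `f ↦ φ + V f` on `ℝ →ᵇ ℂ`, where
`φ x = e^{-ikx}` and `(V f) x = ∫_{t ≤ x} K x t f t` with `K x t = sin (k (x - t)) / k · q t`.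
The kernel is dominated by the integrable weight `w = |q| / |k|`, and induction on `n`, using
`∫_{t ≤ x} w Wⁿ = W(x)ⁿ⁺¹ / (n + 1)` for `W x = ∫_{t ≤ x} w`, gives
`|Vⁿ f x - Vⁿ g x| ≤ ‖f - g‖ W(x)ⁿ / n!`. So the `n`-th iterate of the map is Lipschitz with
constant `(∫ w)ⁿ / n! → 0`; some iterate is a contraction, and Banach's fixed point theorem gives
existence and uniqueness.
-/

open MeasureTheory Set Filter Topology BoundedContinuousFunction Function

section Primitive

variable {E : Type*} [NormedAddCommGroup E] [NormedSpace ℝ E] {f : ℝ → E}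

theorem integral_Iic_eq_integral_Iic_add_intervalIntegral (hf : Integrable f) (a x : ℝ) :
    ∫ t in Iic x, f t = (∫ t in Iic a, f t) + ∫ t in a..x, f t := by
  rw [← intervalIntegral.integral_Iic_sub_Iic hf.integrableOn hf.integrableOn, add_sub_cancel]

theorem continuous_integral_Iic (hf : Integrable f) : Continuous fun x => ∫ t in Iic x, f t := by
  rw [funext (integral_Iic_eq_integral_Iic_add_intervalIntegral hf 0)]
  exact continuous_const.add (hf.continuous_primitive 0)

theorem hasDerivAt_integral_Iic [CompleteSpace E] (hf : Integrable f) (hc : Continuous f)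
    (x : ℝ) : HasDerivAt (fun y => ∫ t in Iic y, f t) (f x) x := by
  rw [funext (integral_Iic_eq_integral_Iic_add_intervalIntegral hf 0)]
  exact (intervalIntegral.integral_hasDerivAt_right hf.intervalIntegrable
      (hc.stronglyMeasurableAtFilter _ _) hc.continuousAt).const_add _

end Primitive

section PrimitivePow

variable {w : ℝ → ℝ}

theorem integrableOn_mul_pow_integral_Iic (hwi : Integrable w) (n : ℕ) (x : ℝ) :
    IntegrableOn (fun t => w t * (∫ s in Iic t, w s) ^ n) (Iic x) := by
  refine hwi.integrableOn.mul_bdd (c := (∫ t, ‖w t‖) ^ n)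
    ((continuous_integral_Iic hwi).pow n).aestronglyMeasurable (.of_forall fun t => ?_)
  rw [norm_pow]
  exact pow_le_pow_left₀ (norm_nonneg _)
    ((norm_integral_le_integral_norm _).trans (setIntegral_le_integral hwi.norm
      (.of_forall fun _ => norm_nonneg _))) n

/-- `Wⁿ⁺¹ / (n + 1)` is a primitive of `w Wⁿ` vanishing at `-∞`, where `W x = ∫_{t ≤ x} w t`. -/
theorem integral_Iic_mul_pow_integral_Iic (hw : Continuous w) (hwi : Integrable w) (n : ℕ)
    (x : ℝ) :
    ∫ t in Iic x, w t * (∫ s in Iic t, w s) ^ n = (∫ t in Iic x, w t) ^ (n + 1) / (n + 1) := by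
  have hderiv (y : ℝ) : HasDerivAt (fun y => (∫ t in Iic y, w t) ^ (n + 1) / (n + 1))
      (w y * (∫ s in Iic y, w s) ^ n) y := by
    refine (((hasDerivAt_integral_Iic hwi hw y).fun_pow (n + 1)).div_const _).congr_deriv ?_
    rw [Nat.add_sub_cancel]
    push_cast
    field_simp
  have hlim : Tendsto (fun y => (∫ t in Iic y, w t) ^ (n + 1) / (n + 1)) atBot (𝓝 0) := by
    simpa using ((tendsto_integral_Iic_zero (f := w) tendsto_id).pow (n + 1)).div_const
      ((n : ℝ) + 1)
  rw [integral_Iic_of_hasDerivAt_of_tendsto' (fun y _ => hderiv y)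
    (integrableOn_mul_pow_integral_Iic hwi n x) hlim, sub_zero]

end PrimitivePow

section Volterra

variable {𝕜 : Type*} [RCLike 𝕜] {K : ℝ → ℝ → 𝕜} {w : ℝ → ℝ}

theorem norm_kernel_mul_le (hKw : ∀ x t, ‖K x t‖ ≤ w t) {x t : ℝ} {z : 𝕜} {b : ℝ}
    (hz : ‖z‖ ≤ b) : ‖K x t * z‖ ≤ w t * b := by
  rw [norm_mul]
  exact mul_le_mul (hKw x t) hz (norm_nonneg _) ((norm_nonneg _).trans (hKw x t))

theorem norm_setIntegral_Iic_mul_le (hKw : ∀ x t, ‖K x t‖ ≤ w t) {h : ℝ → 𝕜} {b : ℝ → ℝ}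
    {x : ℝ} (hb : IntegrableOn (fun t => w t * b t) (Iic x)) (hhb : ∀ t, ‖h t‖ ≤ b t) :
    ‖∫ t in Iic x, K x t * h t‖ ≤ ∫ t in Iic x, w t * b t :=
  norm_integral_le_of_norm_le hb <| .of_forall fun _ => norm_kernel_mul_le hKw (hhb _)

theorem integrable_mul_boundedContinuous (hK : Continuous (uncurry K)) (hwi : Integrable w)
    (hKw : ∀ x t, ‖K x t‖ ≤ w t) (f : ℝ →ᵇ 𝕜) (x : ℝ) : Integrable fun t => K x t * f t := by
  refine (hwi.mul_const ‖f‖).mono'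
    ((hK.comp (Continuous.prodMk_right x)).mul f.continuous).aestronglyMeasurable
    (.of_forall fun t => norm_kernel_mul_le hKw (f.norm_coe_le_norm t))

theorem norm_setIntegral_Iic_mul_boundedContinuous_le (hwi : Integrable w)
    (hKw : ∀ x t, ‖K x t‖ ≤ w t) (f : ℝ →ᵇ 𝕜) (x : ℝ) :
    ‖∫ t in Iic x, K x t * f t‖ ≤ (∫ t, w t) * ‖f‖ := by
  have hw : 0 ≤ w := fun t => (norm_nonneg _).trans (hKw x t)
  calc ‖∫ t in Iic x, K x t * f t‖ ≤ ∫ t in Iic x, w t * ‖f‖ :=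
        norm_setIntegral_Iic_mul_le hKw (hwi.mul_const _).integrableOn f.norm_coe_le_norm
    _ ≤ ∫ t, w t * ‖f‖ :=
        setIntegral_le_integral (hwi.mul_const _)
          (.of_forall fun t => mul_nonneg (hw t) (norm_nonneg _))
    _ = (∫ t, w t) * ‖f‖ := integral_mul_const _ _

/-- Dominated convergence: for every `t ≠ x₀`, the integrand `𝟙[t ≤ x] K x t f t` is continuous
in `x` at `x₀`. -/
theorem continuous_setIntegral_Iic_mul_boundedContinuous (hK : Continuous (uncurry K))
    (hwi : Integrable w) (hKw : ∀ x t, ‖K x t‖ ≤ w t) (f : ℝ →ᵇ 𝕜) :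
    Continuous fun x => ∫ t in Iic x, K x t * f t := by
  simp_rw [← integral_indicator measurableSet_Iic]
  refine continuous_iff_continuousAt.2 fun x₀ => continuousAt_of_dominated
    (.of_forall fun x => ((integrable_mul_boundedContinuous hK hwi hKw f x).indicator
      measurableSet_Iic).aestronglyMeasurable)
    (.of_forall fun x => .of_forall fun t => norm_indicator_le_norm_self _ _ |>.trans
      (norm_kernel_mul_le hKw (f.norm_coe_le_norm t))) (hwi.mul_const ‖f‖) ?_
  filter_upwards [measure_eq_zero_iff_ae_notMem.1 (measure_singleton x₀)] with t ht
  rcases lt_or_gt_of_ne (ht : t ≠ x₀) with hlt | hgt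
  · have hcont : ContinuousAt (fun x => K x t * f t) x₀ :=
      ((hK.comp (Continuous.prodMk_left t)).mul continuous_const).continuousAt
    refine hcont.congr (eventually_gt_nhds hlt |>.mono fun x hx => ?_)
    simp [indicator_of_mem (show t ∈ Iic x from hx.le)]
  · refine (continuousAt_const (y := (0 : 𝕜))).congr
      (eventually_lt_nhds hgt |>.mono fun x hx => ?_)
    simp [indicator_of_notMem (show t ∉ Iic x from not_le.2 hx)]

variable (hK : Continuous (uncurry K)) (hwi : Integrable w) (hKw : ∀ x t, ‖K x t‖ ≤ w t)
  (φ : ℝ →ᵇ 𝕜)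

noncomputable def volterraMap (f : ℝ →ᵇ 𝕜) : ℝ →ᵇ 𝕜 :=
  φ + ofNormedAddCommGroup (fun x => ∫ t in Iic x, K x t * f t)
    (continuous_setIntegral_Iic_mul_boundedContinuous hK hwi hKw f) ((∫ t, w t) * ‖f‖)
    (norm_setIntegral_Iic_mul_boundedContinuous_le hwi hKw f)

theorem volterraMap_apply (f : ℝ →ᵇ 𝕜) (x : ℝ) :
    volterraMap hK hwi hKw φ f x = φ x + ∫ t in Iic x, K x t * f t :=
  rfl

theorem volterraMap_apply_sub_apply (f g : ℝ →ᵇ 𝕜) (x : ℝ) :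
    volterraMap hK hwi hKw φ f x - volterraMap hK hwi hKw φ g x =
      ∫ t in Iic x, K x t * (f t - g t) := by
  simp_rw [volterraMap_apply, mul_sub]
  rw [integral_sub (integrable_mul_boundedContinuous hK hwi hKw f x).integrableOn
    (integrable_mul_boundedContinuous hK hwi hKw g x).integrableOn]
  ring

theorem norm_iterate_volterraMap_sub_le (hw : Continuous w) (n : ℕ) (f g : ℝ →ᵇ 𝕜) (x : ℝ) :
    ‖(volterraMap hK hwi hKw φ)^[n] f x - (volterraMap hK hwi hKw φ)^[n] g x‖ ≤
      dist f g * (∫ t in Iic x, w t) ^ n / n.factorial := by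
  induction n generalizing x with
  | zero => simpa [← dist_eq_norm] using dist_coe_le_dist x
  | succ n ih =>
    rw [iterate_succ_apply', iterate_succ_apply', volterraMap_apply_sub_apply]
    calc _ ≤ ∫ t in Iic x, w t * (dist f g * (∫ s in Iic t, w s) ^ n / n.factorial) :=
          norm_setIntegral_Iic_mul_le hKw (((integrableOn_mul_pow_integral_Iic hwi n x).const_mul
            (dist f g / n.factorial)).congr (.of_forall fun t => by ring)) ih
      _ = dist f g / n.factorial * ∫ t in Iic x, w t * (∫ s in Iic t, w s) ^ n := by
          rw [← integral_const_mul]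
          congr with t
          ring
      _ = dist f g * (∫ t in Iic x, w t) ^ (n + 1) / (n + 1).factorial := by
          rw [integral_Iic_mul_pow_integral_Iic hw hwi n x, Nat.factorial_succ]
          push_cast
          field_simp

theorem lipschitzWith_iterate_volterraMap (hw : Continuous w) (n : ℕ) :
    LipschitzWith (Real.toNNReal ((∫ t, w t) ^ n / n.factorial))
      (volterraMap hK hwi hKw φ)^[n] := by
  have hw0 : 0 ≤ w := fun t => (norm_nonneg _).trans (hKw 0 t)
  have hW (x : ℝ) : (∫ t in Iic x, w t) ^ n ≤ (∫ t, w t) ^ n :=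
    pow_le_pow_left₀ (setIntegral_nonneg measurableSet_Iic fun t _ => hw0 t)
      (setIntegral_le_integral hwi (.of_forall hw0)) n
  have hc : 0 ≤ (∫ t, w t) ^ n / n.factorial := by
    have : 0 ≤ ∫ t, w t := integral_nonneg hw0
    positivity
  refine LipschitzWith.of_dist_le_mul fun f g => ?_
  rw [Real.coe_toNNReal _ hc]
  refine (dist_le (mul_nonneg hc dist_nonneg)).2 fun x => ?_
  rw [dist_eq_norm]
  refine (norm_iterate_volterraMap_sub_le hK hwi hKw φ hw n f g x).trans ?_
  calc _ ≤ dist f g * (∫ t, w t) ^ n / n.factorial := by gcongr dist f g * ?_ / _; exact hW x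
    _ = _ := by ring

theorem existsUnique_isFixedPt_volterraMap (hw : Continuous w) :
    ∃! f, IsFixedPt (volterraMap hK hwi hKw φ) f := by
  obtain ⟨n, hn⟩ : ∃ n : ℕ, (∫ t, w t) ^ n / n.factorial < 1 :=
    ((FloorSemiring.tendsto_pow_div_factorial_atTop (∫ t, w t)).eventually
      (gt_mem_nhds one_pos)).exists
  have hC : ContractingWith _ (volterraMap hK hwi hKw φ)^[n] :=
    ⟨by exact_mod_cast Real.toNNReal_lt_one.2 hn,
      lipschitzWith_iterate_volterraMap hK hwi hKw φ hw n⟩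
  have : Nonempty (ℝ →ᵇ 𝕜) := ⟨0⟩
  exact ⟨_, hC.isFixedPt_fixedPoint_iterate, fun g hg => hC.fixedPoint_unique (hg.iterate n)⟩

end Volterra

theorem existsUnique_volterra_solution {𝕜 : Type*} [RCLike 𝕜] {K : ℝ → ℝ → 𝕜} {w : ℝ → ℝ}
    (hK : Continuous (uncurry K)) (hw : Continuous w) (hwi : Integrable w)
    (hKw : ∀ x t, ‖K x t‖ ≤ w t) {φ : ℝ → 𝕜} (hφ : Continuous φ)
    (hφb : ∃ C, ∀ x, ‖φ x‖ ≤ C) :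
    ∃! f : ℝ → 𝕜, Continuous f ∧ (∃ C : ℝ, ∀ x, ‖f x‖ ≤ C) ∧
      ∀ x, f x = φ x + ∫ t in Iic x, K x t * f t := by
  obtain ⟨Cφ, hCφ⟩ := hφb
  obtain ⟨f, hf, hunique⟩ := existsUnique_isFixedPt_volterraMap hK hwi hKw
    (ofNormedAddCommGroup φ hφ Cφ hCφ) hw
  refine ⟨f, ⟨f.continuous, ⟨‖f‖, f.norm_coe_le_norm⟩, fun x => (DFunLike.congr_fun hf x).symm⟩,
    fun g ⟨hg, ⟨C, hC⟩, hgeq⟩ => ?_⟩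
  exact congrArg (⇑) (hunique (ofNormedAddCommGroup g hg C hC) (ext fun x => (hgeq x).symm))

theorem left_jost_solution_exists_unique_general (q : ℝ → ℂ) (hq : Continuous q)
    (hq' : Integrable (fun x => (1 + |x|) * ‖q x‖)) (k : ℝ) :
    ∃! f : ℝ → ℂ, Continuous f ∧ (∃ C : ℝ, ∀ x, ‖f x‖ ≤ C) ∧
      ∀ x : ℝ, f x = Complex.exp (-(Complex.I * k * x)) +
        ∫ t in Set.Iic x, ((Real.sin (k * (x - t)) / k : ℝ) : ℂ) * q t * f t := by
  have hqi : Integrable fun t => ‖q t‖ :=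
    hq'.mono' hq.norm.aestronglyMeasurable (.of_forall fun x => by
      rw [norm_norm]
      exact le_mul_of_one_le_left (norm_nonneg _) (by linarith [abs_nonneg x]))
  have hkernel (x t : ℝ) : ‖((Real.sin (k * (x - t)) / k : ℝ) : ℂ) * q t‖ ≤ ‖q t‖ / |k| := by
    rw [norm_mul, Complex.norm_real, Real.norm_eq_abs, abs_div, div_mul_eq_mul_div]
    gcongr
    exact mul_le_of_le_one_left (norm_nonneg _) (Real.abs_sin_le_one _)
  refine existsUnique_volterra_solution (by fun_prop) (by fun_prop) (hqi.div_const |k|) hkernel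
    (by fun_prop) ⟨1, fun x => ?_⟩
  rw [Complex.norm_exp]
  simp

/-- Existence and uniqueness of the left Jost solution `f₋(k,·)`: for a Faddeev-class
potential `q` and nonzero real `k`, there is a unique bounded continuous `f : ℝ → ℂ` with
`f x = e^{−ikx} + ∫_{−∞}^x (sin(k(x−t))/k) q(t) f(t) dt`. -/
theorem left_jost_solution_exists_unique (q : ℝ → ℂ) (hq : Continuous q)
    (hq' : Integrable (fun x => (1 + |x|) * ‖q x‖)) (k : ℝ) (hk : k ≠ 0) :
    ∃! f : ℝ → ℂ, Continuous f ∧ (∃ C : ℝ, ∀ x, ‖f x‖ ≤ C) ∧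
      ∀ x : ℝ, f x = Complex.exp (-(Complex.I * k * x)) +
        ∫ t in Set.Iic x, ((Real.sin (k * (x - t)) / k : ℝ) : ℂ) * q t * f t :=
  left_jost_solution_exists_unique_general q hq hq' k
end

section
/- Let q : ℝ → ℂ be continuous with ∫_ℝ (1+|x|)|q(x)| dx < ∞, let k be a nonzero real number, and let f : ℝ → ℂ be a bounded continuous function satisfying f(x) = e^{−ikx} + ∫_{−∞}^x (sin(k(x−t))/k) · q(t) · f(t) dt for all x. Then f(x) · e^{ikx} → 1 as x → −∞. -/
/-!
Since `|sin| ≤ 1`, the Volterra term is bounded by `(sup ‖f‖ / |k|) ∫_{-∞}^x ‖q‖`, and multiplying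
by the unimodular `e^{ikx}` turns `f x` into `1` plus that term. The bound is a tail of the
integrable function `‖q‖`, hence tends to `0` at `-∞`.
-/

open MeasureTheory Filter

lemma integrable_of_integrable_one_add_abs_mul {μ : Measure ℝ} {g : ℝ → ℝ}
    (h : Integrable (fun x => (1 + |x|) * g x) μ) : Integrable g μ := by
  have hpos : ∀ x : ℝ, 0 < 1 + |x| := fun x => by positivity
  have hweight : Continuous fun x : ℝ => (1 + |x|)⁻¹ :=
    (continuous_const.add continuous_abs).inv₀ fun x => (hpos x).ne'
  refine (h.bdd_mul (c := 1) hweight.aestronglyMeasurable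
    (ae_of_all _ fun x => ?_)).congr (ae_of_all _ fun x => ?_)
  · rw [norm_inv, Real.norm_of_nonneg (hpos x).le]
    exact inv_le_one_of_one_le₀ (by simp)
  · exact inv_mul_cancel_left₀ (hpos x).ne' _

lemma norm_sin_mul_div_le (k s : ℝ) : ‖((Real.sin (k * s) / k : ℝ) : ℂ)‖ ≤ |k|⁻¹ := by
  rw [Complex.norm_real, Real.norm_eq_abs, abs_div, ← one_div]
  exact div_le_div_of_nonneg_right (Real.abs_sin_le_one _) (abs_nonneg k)

lemma norm_setIntegral_sin_kernel_le {q f : ℝ → ℂ} {C : ℝ} (hq : Integrable fun t => ‖q t‖)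
    (hf : ∀ t, ‖f t‖ ≤ C) (k x : ℝ) :
    ‖∫ t in Set.Iic x, ((Real.sin (k * (x - t)) / k : ℝ) : ℂ) * q t * f t‖ ≤
      C / |k| * ∫ t in Set.Iic x, ‖q t‖ := by
  rw [← integral_const_mul]
  refine norm_integral_le_of_norm_le (hq.const_mul _).restrict (ae_of_all _ fun t => ?_)
  calc ‖((Real.sin (k * (x - t)) / k : ℝ) : ℂ) * q t * f t‖
      ≤ |k|⁻¹ * ‖q t‖ * C := by
        rw [norm_mul, norm_mul]
        gcongr
        exacts [norm_sin_mul_div_le k _, hf t]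
    _ = C / |k| * ‖q t‖ := by ring

lemma norm_exp_neg_add_mul_exp_sub_one (k x : ℝ) (z : ℂ) :
    ‖(Complex.exp (-(Complex.I * k * x)) + z) * Complex.exp (Complex.I * k * x) - 1‖ = ‖z‖ := by
  have hexp : Complex.exp (-(Complex.I * k * x)) * Complex.exp (Complex.I * k * x) = 1 := by
    rw [← Complex.exp_add, neg_add_cancel, Complex.exp_zero]
  have hnorm : ‖Complex.exp (Complex.I * k * x)‖ = 1 := by
    rw [show Complex.I * k * x = ((k * x : ℝ) : ℂ) * Complex.I by push_cast; ring]
    exact Complex.norm_exp_ofReal_mul_I _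
  rw [add_mul, hexp, add_sub_cancel_left, norm_mul, hnorm, mul_one]

theorem left_jost_solution_asymptotics_general (q : ℝ → ℂ)
    (hq' : Integrable (fun x => (1 + |x|) * ‖q x‖)) (k : ℝ)
    (f : ℝ → ℂ) (hfb : ∃ C : ℝ, ∀ x, ‖f x‖ ≤ C)
    (heq : ∀ x : ℝ, f x = Complex.exp (-(Complex.I * k * x)) +
        ∫ t in Set.Iic x, ((Real.sin (k * (x - t)) / k : ℝ) : ℂ) * q t * f t) :
    Tendsto (fun x : ℝ => f x * Complex.exp (Complex.I * k * x)) atBot (nhds 1) := by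
  obtain ⟨C, hC⟩ := hfb
  have hqn : Integrable fun t => ‖q t‖ := integrable_of_integrable_one_add_abs_mul hq'
  have herr : ∀ x, ‖f x * Complex.exp (Complex.I * k * x) - 1‖ ≤
      C / |k| * ∫ t in Set.Iic x, ‖q t‖ := fun x => by
    rw [heq x, norm_exp_neg_add_mul_exp_sub_one]
    exact norm_setIntegral_sin_kernel_le hqn hC k x
  have htail : Tendsto (fun x => C / |k| * ∫ t in Set.Iic x, ‖q t‖) atBot (nhds 0) := by
    simpa using (tendsto_integral_Iic_zero tendsto_id).const_mul (C / |k|)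
  exact tendsto_iff_norm_sub_tendsto_zero.2 <|
    squeeze_zero (fun x => norm_nonneg _) herr htail

/-- Asymptotics of the left Jost solution: if `f` is a bounded continuous solution of
`f x = e^{−ikx} + ∫_{−∞}^x (sin(k(x−t))/k) q(t) f(t) dt`, then `f(x)·e^{ikx} → 1`
as `x → −∞`. -/
theorem left_jost_solution_asymptotics (q : ℝ → ℂ) (hq : Continuous q)
    (hq' : Integrable (fun x => (1 + |x|) * ‖q x‖)) (k : ℝ) (hk : k ≠ 0)
    (f : ℝ → ℂ) (hf : Continuous f) (hfb : ∃ C : ℝ, ∀ x, ‖f x‖ ≤ C)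
    (heq : ∀ x : ℝ, f x = Complex.exp (-(Complex.I * k * x)) +
        ∫ t in Set.Iic x, ((Real.sin (k * (x - t)) / k : ℝ) : ℂ) * q t * f t) :
    Tendsto (fun x : ℝ => f x * Complex.exp (Complex.I * k * x)) atBot (nhds 1) :=
  left_jost_solution_asymptotics_general q hq' k f hfb heq
end

section
/- Let q : ℝ → ℂ be continuous with ∫_ℝ (1+|x|)|q(x)| dx < ∞ and let k be a nonzero real number. Let f₊(k,·) and f₊(−k,·) be the right Jost solutions for k and −k respectively. Then their Wronskian is constant and equals −2ik: for every x ∈ ℝ, f₊(k,x) · (f₊(−k,·))'(x) − (f₊(k,·))'(x) · f₊(−k,x) = −2ik. In particular f₊(k,·) and f₊(−k,·) are linearly independent solutions of −ψ'' + qψ = k²ψ. -/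
/-!
Expanding `sin (k (x - t)) = sin (k x) cos (k t) - cos (k x) sin (k t)` puts the Volterra equation
in variation-of-parameters form `f = e^{ikx} - (sin (k x) A - cos (k x) B) / k`, where `A`, `B`
are the tails `∫_x^∞ cos (k t) q f` and `∫_x^∞ sin (k t) q f`. The derivatives of the tails cancel
in `f'`, so `f' = ik e^{ikx} - cos (k x) A - sin (k x) B`, and differentiating once more gives
`f'' = (q - k²) f`. As the tails vanish at `+∞`, `f ~ e^{ikx}` and `f' ~ ik e^{ikx}` there. The
Wronskian of two solutions of the same equation is constant, and these asymptotics evaluate it at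
`+∞` as the Wronskian of `e^{ikx}` and `e^{-ikx}`, which is `-2ik`.
-/

open MeasureTheory Filter Topology Set

section TailIntegral

variable {E : Type*} [NormedAddCommGroup E] [NormedSpace ℝ E] {c : ℝ → E}

theorem hasDerivAt_integral_Ici [CompleteSpace E] (hc : Integrable c) {x : ℝ}
    (hcx : ContinuousAt c x) : HasDerivAt (fun y => ∫ t in Ici y, c t) (-c x) x := by
  have hFTC := (intervalIntegral.integral_hasDerivAt_right
    (hc.intervalIntegrable (a := 0) (b := x)) hc.aestronglyMeasurable.stronglyMeasurableAtFilter
    hcx).const_sub (∫ t in Ici 0, c t)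
  refine hFTC.congr_of_eventuallyEq (Eventually.of_forall fun y => ?_)
  change ∫ t in Ici y, c t = (∫ t in Ici 0, c t) - ∫ t in 0..y, c t
  rw [← intervalIntegral.integral_Ici_sub_Ici' hc.integrableOn hc.integrableOn, sub_sub_cancel]

theorem tendsto_integral_Ici_atTop : Tendsto (fun y => ∫ t in Ici y, c t) atTop (𝓝 0) := by
  simpa only [integral_Ici_eq_integral_Ioi, id] using tendsto_integral_Ioi_zero tendsto_id

end TailIntegral

theorem tendsto_mul_sub_mul_of_tendsto_sub {ι 𝔸 : Type*} [NonUnitalSeminormedRing 𝔸]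
    {l : Filter ι} {u v a b : ι → 𝔸} (hu : IsBoundedUnder (· ≤ ·) l (norm ∘ u))
    (hb : IsBoundedUnder (· ≤ ·) l (norm ∘ b)) (hua : Tendsto (fun i => u i - a i) l (𝓝 0))
    (hvb : Tendsto (fun i => v i - b i) l (𝓝 0)) :
    Tendsto (fun i => u i * v i - a i * b i) l (𝓝 0) := by
  have h := (isBoundedUnder_le_mul_tendsto_zero hu hvb).add (hua.zero_mul_isBoundedUnder_le hb)
  rw [add_zero] at h
  exact h.congr fun i => by noncomm_ring

theorem wronskian_eq_of_hasDerivAt {V u v du dv : ℝ → ℂ} (hu : ∀ x, HasDerivAt u (du x) x)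
    (hdu : ∀ x, HasDerivAt du (V x * u x) x) (hv : ∀ x, HasDerivAt v (dv x) x)
    (hdv : ∀ x, HasDerivAt dv (V x * v x) x) (x y : ℝ) :
    u x * dv x - du x * v x = u y * dv y - du y * v y := by
  have hW : ∀ z, HasDerivAt (fun z => u z * dv z - du z * v z) 0 z := fun z =>
    (((hu z).mul (hdv z)).sub ((hdu z).mul (hv z))).congr_deriv (by ring)
  exact is_const_of_deriv_eq_zero (fun z => (hW z).differentiableAt) (fun z => (hW z).deriv) x y

noncomputable def planeWave (k x : ℝ) : ℂ := Complex.exp (Complex.I * k * x)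

theorem norm_planeWave (k x : ℝ) : ‖planeWave k x‖ = 1 := by
  simpa [planeWave, mul_assoc] using Complex.norm_exp_I_mul_ofReal (k * x)

theorem planeWave_mul_planeWave_neg (k x : ℝ) : planeWave k x * planeWave (-k) x = 1 := by
  rw [planeWave, planeWave, ← Complex.exp_add]
  push_cast
  ring_nf
  exact Complex.exp_zero

theorem hasDerivAt_planeWave (k x : ℝ) :
    HasDerivAt (planeWave k) (Complex.I * k * planeWave k x) x := by
  have h := ((hasDerivAt_id (x : ℂ)).const_mul (Complex.I * k)).cexp.comp_ofReal
  simp only [id, mul_one] at h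
  exact h.congr_deriv (mul_comm _ _)

theorem isBoundedUnder_const_mul_planeWave {l : Filter ℝ} (c : ℂ) (k : ℝ) :
    IsBoundedUnder (· ≤ ·) l (norm ∘ fun x => c * planeWave k x) :=
  isBoundedUnder_of ⟨‖c‖, fun x => by simp [norm_planeWave]⟩

theorem tendsto_wronskian_of_tendsto_planeWave {u du v dv : ℝ → ℂ} {k : ℝ}
    (hu : IsBoundedUnder (· ≤ ·) atTop (norm ∘ u)) (hv : IsBoundedUnder (· ≤ ·) atTop (norm ∘ v))
    (hu₀ : Tendsto (fun x => u x - planeWave k x) atTop (𝓝 0))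
    (hdu₀ : Tendsto (fun x => du x - Complex.I * k * planeWave k x) atTop (𝓝 0))
    (hv₀ : Tendsto (fun x => v x - planeWave (-k) x) atTop (𝓝 0))
    (hdv₀ : Tendsto (fun x => dv x - Complex.I * (-k : ℝ) * planeWave (-k) x) atTop (𝓝 0)) :
    Tendsto (fun x => u x * dv x - du x * v x) atTop (𝓝 (-(2 * Complex.I * k))) := by
  have h := (tendsto_mul_sub_mul_of_tendsto_sub hu (isBoundedUnder_const_mul_planeWave _ _) hu₀
    hdv₀).sub (tendsto_mul_sub_mul_of_tendsto_sub hv (isBoundedUnder_const_mul_planeWave _ _)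
    hv₀ hdu₀)
  rw [sub_zero] at h
  refine tendsto_sub_nhds_zero_iff.mp (h.congr fun x => ?_)
  push_cast
  linear_combination (2 * Complex.I * k) * planeWave_mul_planeWave_neg k x

def JostVolterraEq (q : ℝ → ℂ) (k : ℝ) (f : ℝ → ℂ) : Prop :=
  ∀ x : ℝ, f x = planeWave k x -
    ∫ t in Ici x, ((Real.sin (k * (x - t)) / k : ℝ) : ℂ) * q t * f t

noncomputable def cosTail (g : ℝ → ℂ) (k x : ℝ) : ℂ :=
  ∫ t in Ici x, (Real.cos (k * t) : ℂ) * g t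

noncomputable def sinTail (g : ℝ → ℂ) (k x : ℝ) : ℂ :=
  ∫ t in Ici x, (Real.sin (k * t) : ℂ) * g t

noncomputable def jostDeriv (g : ℝ → ℂ) (k x : ℝ) : ℂ :=
  Complex.I * k * planeWave k x -
    (Real.cos (k * x) * cosTail g k x + Real.sin (k * x) * sinTail g k x)

theorem MeasureTheory.Integrable.ofReal_mul {w : ℝ → ℝ} {g : ℝ → ℂ} (hg : Integrable g)
    (hw : Continuous w) (hw₁ : ∀ t, |w t| ≤ 1) : Integrable fun t => (w t : ℂ) * g t :=
  hg.bdd_mul (by fun_prop : Continuous fun t => (w t : ℂ)).aestronglyMeasurable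
    (ae_of_all _ fun t => by simpa using hw₁ t)

theorem Filter.Tendsto.ofReal_mul_zero {α : Type*} {l : Filter α} {w : α → ℝ} {A : α → ℂ}
    (hA : Tendsto A l (𝓝 0)) (hw : ∀ x, |w x| ≤ 1) :
    Tendsto (fun x => (w x : ℂ) * A x) l (𝓝 0) :=
  isBoundedUnder_le_mul_tendsto_zero (isBoundedUnder_of ⟨1, fun x => by simpa using hw x⟩) hA

theorem hasDerivAt_cosTail {g : ℝ → ℂ} (k : ℝ) (hg : Integrable g) (hgc : Continuous g)
    (x : ℝ) : HasDerivAt (cosTail g k) (-(Real.cos (k * x) * g x)) x :=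
  hasDerivAt_integral_Ici (hg.ofReal_mul (by fun_prop) fun _ => Real.abs_cos_le_one _)
    (by fun_prop)

theorem hasDerivAt_sinTail {g : ℝ → ℂ} (k : ℝ) (hg : Integrable g) (hgc : Continuous g)
    (x : ℝ) : HasDerivAt (sinTail g k) (-(Real.sin (k * x) * g x)) x :=
  hasDerivAt_integral_Ici (hg.ofReal_mul (by fun_prop) fun _ => Real.abs_sin_le_one _)
    (by fun_prop)

theorem hasDerivAt_ofReal_sin_mul (k x : ℝ) :
    HasDerivAt (fun x : ℝ => (Real.sin (k * x) : ℂ)) (k * Real.cos (k * x)) x := by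
  have h := ((Real.hasDerivAt_sin _).comp x ((hasDerivAt_id x).const_mul k)).ofReal_comp
  simp only [Function.comp_def, id, mul_one] at h
  exact h.congr_deriv (by push_cast; ring)

theorem hasDerivAt_ofReal_cos_mul (k x : ℝ) :
    HasDerivAt (fun x : ℝ => (Real.cos (k * x) : ℂ)) (-(k * Real.sin (k * x))) x := by
  have h := ((Real.hasDerivAt_cos _).comp x ((hasDerivAt_id x).const_mul k)).ofReal_comp
  simp only [Function.comp_def, id, mul_one] at h
  exact h.congr_deriv (by push_cast; ring)

theorem tendsto_cosTail (g : ℝ → ℂ) (k : ℝ) : Tendsto (cosTail g k) atTop (𝓝 0) :=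
  tendsto_integral_Ici_atTop

theorem tendsto_sinTail (g : ℝ → ℂ) (k : ℝ) : Tendsto (sinTail g k) atTop (𝓝 0) :=
  tendsto_integral_Ici_atTop

theorem tendsto_jostDeriv_sub (g : ℝ → ℂ) (k : ℝ) :
    Tendsto (fun x => jostDeriv g k x - Complex.I * k * planeWave k x) atTop (𝓝 0) := by
  have h := (((tendsto_cosTail g k).ofReal_mul_zero fun x => Real.abs_cos_le_one (k * x)).add
    ((tendsto_sinTail g k).ofReal_mul_zero fun x => Real.abs_sin_le_one (k * x))).neg
  simpa only [jostDeriv, add_zero, neg_zero, sub_sub_cancel_left] using h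

namespace JostVolterraEq

variable {q f : ℝ → ℂ} {k : ℝ}

theorem eq_planeWave_sub (h : JostVolterraEq q k f) (hg : Integrable (q * f)) (x : ℝ) :
    f x = planeWave k x -
      (Real.sin (k * x) * cosTail (q * f) k x - Real.cos (k * x) * sinTail (q * f) k x) / k := by
  have hc := hg.ofReal_mul (by fun_prop) fun t => Real.abs_cos_le_one (k * t)
  have hs := hg.ofReal_mul (by fun_prop) fun t => Real.abs_sin_le_one (k * t)
  rw [h x, cosTail, sinTail, ← integral_const_mul, ← integral_const_mul,
    ← integral_sub (hc.const_mul _).integrableOn (hs.const_mul _).integrableOn, ← integral_div]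
  congr 2 with t
  rw [mul_sub, Real.sin_sub]
  push_cast
  simp only [Pi.mul_apply]
  ring

theorem hasDerivAt (h : JostVolterraEq q k f) (hk : k ≠ 0) (hg : Integrable (q * f))
    (hgc : Continuous (q * f)) (x : ℝ) : HasDerivAt f (jostDeriv (q * f) k x) x := by
  have hN := ((hasDerivAt_ofReal_sin_mul k x).mul (hasDerivAt_cosTail k hg hgc x)).sub
    ((hasDerivAt_ofReal_cos_mul k x).mul (hasDerivAt_sinTail k hg hgc x))
  refine (((hasDerivAt_planeWave k x).sub (hN.div_const (k : ℂ))).congr_deriv ?_)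
    |>.congr_of_eventuallyEq (Eventually.of_forall (h.eq_planeWave_sub hg))
  have hk' : (k : ℂ) ≠ 0 := Complex.ofReal_ne_zero.mpr hk
  rw [jostDeriv]
  field_simp
  ring

theorem hasDerivAt_jostDeriv (h : JostVolterraEq q k f) (hk : k ≠ 0) (hg : Integrable (q * f))
    (hgc : Continuous (q * f)) (x : ℝ) :
    HasDerivAt (jostDeriv (q * f) k) ((q x - (k ^ 2 : ℝ)) * f x) x := by
  have hd := ((hasDerivAt_planeWave k x).const_mul (Complex.I * k)).sub
    (((hasDerivAt_ofReal_cos_mul k x).mul (hasDerivAt_cosTail k hg hgc x)).add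
      ((hasDerivAt_ofReal_sin_mul k x).mul (hasDerivAt_sinTail k hg hgc x)))
  refine hd.congr_deriv ?_
  have hk' : (k : ℂ) ≠ 0 := Complex.ofReal_ne_zero.mpr hk
  have hf : (k : ℂ) * (f x - planeWave k x) =
      -(Real.sin (k * x) * cosTail (q * f) k x - Real.cos (k * x) * sinTail (q * f) k x) := by
    rw [h.eq_planeWave_sub hg x]
    field_simp
    ring
  have pythagoras : (Real.cos (k * x) : ℂ) ^ 2 + (Real.sin (k * x) : ℂ) ^ 2 = 1 := by
    exact_mod_cast Real.cos_sq_add_sin_sq (k * x)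
  simp only [Pi.mul_apply]
  push_cast at hf pythagoras ⊢
  linear_combination (k : ℂ) * hf + q x * f x * pythagoras
    + (k : ℂ) ^ 2 * planeWave k x * Complex.I_sq

theorem tendsto_sub_planeWave (h : JostVolterraEq q k f) (hg : Integrable (q * f)) :
    Tendsto (fun x => f x - planeWave k x) atTop (𝓝 0) := by
  have hA := (tendsto_cosTail (q * f) k).ofReal_mul_zero fun x => Real.abs_sin_le_one (k * x)
  have hB := (tendsto_sinTail (q * f) k).ofReal_mul_zero fun x => Real.abs_cos_le_one (k * x)
  have hN := ((hA.sub hB).div_const (k : ℂ)).neg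
  rw [sub_zero, zero_div, neg_zero] at hN
  refine hN.congr fun x => ?_
  rw [h.eq_planeWave_sub hg x]
  ring

end JostVolterraEq

/-- The Wronskian of the right Jost solutions `f₊(k,·)` and `f₊(−k,·)` is the constant
`−2ik`; in particular they are linearly independent solutions of `−ψ'' + qψ = k²ψ`. -/
theorem wronskian_jost_solutions (q : ℝ → ℂ) (hq : Continuous q)
    (hq' : Integrable (fun x => (1 + |x|) * ‖q x‖)) (k : ℝ) (hk : k ≠ 0)
    (fp fm : ℝ → ℂ)
    (hfp : Continuous fp) (hfpb : ∃ C : ℝ, ∀ x, ‖fp x‖ ≤ C)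
    (hfpeq : ∀ x : ℝ, fp x = Complex.exp (Complex.I * k * x) -
        ∫ t in Set.Ici x, ((Real.sin (k * (x - t)) / k : ℝ) : ℂ) * q t * fp t)
    (hfm : Continuous fm) (hfmb : ∃ C : ℝ, ∀ x, ‖fm x‖ ≤ C)
    (hfmeq : ∀ x : ℝ, fm x = Complex.exp (Complex.I * (-k) * x) -
        ∫ t in Set.Ici x, ((Real.sin ((-k) * (x - t)) / (-k) : ℝ) : ℂ) * q t * fm t) :
    ∀ x : ℝ, fp x * deriv fm x - deriv fp x * fm x = -(2 * Complex.I * k) := by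
  have hqi : Integrable q := hq'.mono' hq.aestronglyMeasurable (ae_of_all _ fun x =>
    le_mul_of_one_le_left (norm_nonneg _) (le_add_of_nonneg_right (abs_nonneg x)))
  obtain ⟨Cp, hCp⟩ := hfpb
  obtain ⟨Cm, hCm⟩ := hfmb
  have hp : JostVolterraEq q k fp := hfpeq
  have hm : JostVolterraEq q (-k) fm := fun x => by rw [hfmeq x, planeWave, Complex.ofReal_neg]
  have hgp : Integrable (q * fp) := hqi.mul_bdd hfp.aestronglyMeasurable (ae_of_all _ hCp)
  have hgm : Integrable (q * fm) := hqi.mul_bdd hfm.aestronglyMeasurable (ae_of_all _ hCm)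
  have hk' : -k ≠ 0 := neg_ne_zero.mpr hk
  have hdp := hp.hasDerivAt hk hgp (hq.mul hfp)
  have hdm := hm.hasDerivAt hk' hgm (hq.mul hfm)
  have hW := wronskian_eq_of_hasDerivAt hdp (hp.hasDerivAt_jostDeriv hk hgp (hq.mul hfp)) hdm
    (by simpa only [neg_sq] using hm.hasDerivAt_jostDeriv hk' hgm (hq.mul hfm))
  intro x
  rw [(hdp x).deriv, (hdm x).deriv]
  refine tendsto_nhds_unique (l := atTop) (tendsto_const_nhds.congr (hW x)) ?_
  exact tendsto_wronskian_of_tendsto_planeWave (isBoundedUnder_of ⟨Cp, hCp⟩)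
    (isBoundedUnder_of ⟨Cm, hCm⟩) (hp.tendsto_sub_planeWave hgp) (tendsto_jostDeriv_sub _ k)
    (hm.tendsto_sub_planeWave hgm) (tendsto_jostDeriv_sub _ (-k))
end

section
/- (Theorem 2, second relation.) Let q : ℝ → ℂ be continuous with ∫_ℝ (1+|x|)|q(x)| dx < ∞ and let k be a nonzero real number. Let f₋(k,·), f₋(−k,·) be the left Jost solutions for k and −k, and let f₊(k,·) be the right Jost solution for k. Then there exists a unique pair of complex constants (d₁, d₂) such that f₊(k,x) = d₁ · f₋(k,x) + d₂ · f₋(−k,x) for all x ∈ ℝ. (This is the relation s₁₁ f₊ = s₁₂ f₋ + f₋(−k,·) after normalization.) -/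
/-!
Choose `x₀` so far to the left that `∫_{-∞}^{x₀} |q|` is small compared with `|k|`. Writing
`sin (k (x - t)) / k` as a combination of `e^{± ikx}` and splitting each Jost integral at `x₀`,
every Jost solution `u` solves the Volterra equation
`u x = a e^{ikx} + b e^{-ikx} + ∫_{x₀}^x sin (k (x - t)) / k · q t · u t dt`
for constants `(a, b)`. By Grönwall, a continuous solution vanishes iff `(a, b) = 0`, so
`u ↦ (a, b)` is linear and injective on such solutions. For `f₋(k)` and `f₋(-k)` the pairs are
`(0, 1)` and `(1, 0)` up to errors below `1/2`, hence linearly independent, and `f₊(k)` is a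
unique combination of them.
-/

open MeasureTheory Set Complex

section Gronwall

variable {E : Type*} [NormedAddCommGroup E]

theorem eq_zero_of_norm_le_mul_integral_norm {u : ℝ → E} (hu : Continuous u) {a b L : ℝ}
    (h : ∀ x ∈ Icc a b, ‖u x‖ ≤ L * ∫ t in a..x, ‖u t‖) : ∀ x ∈ Icc a b, u x = 0 := by
  set U : ℝ → ℝ := fun x => ∫ t in a..x, ‖u t‖
  have hU (x : ℝ) : HasDerivAt U ‖u x‖ x := (hu.norm.integral_hasStrictDerivAt a x).hasDerivAt
  have hU₀ : ∀ x ∈ Icc a b, U x = 0 := by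
    refine eq_zero_of_abs_deriv_le_mul_abs_self_of_eq_zero_right (K := |L|)
      (fun x _ => (hU x).continuousAt.continuousWithinAt) (fun x _ => (hU x).hasDerivWithinAt)
      (by simp [U]) fun x hx => ?_
    rw [norm_norm, Real.norm_eq_abs, ← abs_mul]
    exact (h x (Ico_subset_Icc_self hx)).trans (le_abs_self _)
  intro x hx
  have := h x hx
  rwa [show (∫ t in a..x, ‖u t‖) = U x from rfl, hU₀ x hx, mul_zero, norm_le_zero_iff] at this

theorem eq_zero_of_norm_le_mul_integral_norm_rev {u : ℝ → E} (hu : Continuous u) {a b L : ℝ}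
    (h : ∀ x ∈ Icc a b, ‖u x‖ ≤ L * ∫ t in x..b, ‖u t‖) : ∀ x ∈ Icc a b, u x = 0 := by
  have hneg := eq_zero_of_norm_le_mul_integral_norm (hu.comp continuous_neg) (a := -b) (b := -a)
    (L := L) fun y hy => by
      simpa [intervalIntegral.integral_comp_neg (fun t => ‖u t‖)] using
        h (-y) ⟨by linarith [hy.2], by linarith [hy.1]⟩
  intro x hx
  simpa using hneg (-x) ⟨by linarith [hx.2], by linarith [hx.1]⟩

end Gronwall

noncomputable def sinKernel (k x t : ℝ) : ℂ := ((Real.sin (k * (x - t)) / k : ℝ) : ℂ)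

section SinKernel

variable {k : ℝ}

theorem sinKernel_neg (k x t : ℝ) : sinKernel (-k) x t = sinKernel k x t := by
  simp only [sinKernel, neg_mul, Real.sin_neg, neg_div_neg_eq]

theorem norm_sinKernel_le (k x t : ℝ) : ‖sinKernel k x t‖ ≤ |k|⁻¹ := by
  rw [sinKernel, Complex.norm_real, Real.norm_eq_abs, abs_div, div_eq_mul_inv]
  exact mul_le_of_le_one_left (by positivity) (Real.abs_sin_le_one _)

theorem continuous_sinKernel (k x : ℝ) : Continuous (sinKernel k x) := by
  unfold sinKernel
  fun_prop

theorem sinKernel_eq_exp (hk : k ≠ 0) (x t : ℝ) :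
    sinKernel k x t = exp (I * k * x) * (exp (-(I * k * t)) / (2 * I * k)) +
      exp (-(I * k * x)) * (exp (-(I * (-k : ℝ) * t)) / (2 * I * (-k : ℝ))) := by
  have hk' : (k : ℂ) ≠ 0 := by exact_mod_cast hk
  have e₁ : -((k * (x - t) : ℝ) : ℂ) * I = I * k * t - I * k * x := by push_cast; ring
  have e₂ : ((k * (x - t) : ℝ) : ℂ) * I = I * k * x - I * k * t := by push_cast; ring
  have e₃ : -(I * (-k : ℝ) * t) = I * k * t := by push_cast; ring
  rw [sinKernel, ofReal_div, ofReal_sin, Complex.sin, e₁, e₂, e₃, exp_sub, exp_sub, exp_neg,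
    exp_neg]
  have := exp_ne_zero (I * k * x)
  have := exp_ne_zero (I * k * t)
  push_cast
  field_simp
  ring_nf
  simp only [I_sq]
  ring

theorem eq_zero_of_eq_volterra {x₀ : ℝ} {q u : ℝ → ℂ} (hq : Continuous q) (hu : Continuous u)
    (h : ∀ x, u x = ∫ t in x₀..x, sinKernel k x t * q t * u t) (x : ℝ) : u x = 0 := by
  obtain ⟨M, hM⟩ := (isCompact_uIcc (a := x₀) (b := x)).exists_bound_of_continuousOn hq.continuousOn
  have hint (a b : ℝ) : IntervalIntegrable (fun t => |k|⁻¹ * M * ‖u t‖) volume a b :=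
    (hu.norm.intervalIntegrable _ _).const_mul _
  have hbound : ∀ y ∈ uIcc x₀ x, ∀ t ∈ uIcc x₀ y,
      ‖sinKernel k y t * q t * u t‖ ≤ |k|⁻¹ * M * ‖u t‖ := fun y hy t ht => by
    rw [norm_mul, norm_mul]
    gcongr
    · exact norm_sinKernel_le k y t
    · exact hM t (uIcc_subset_uIcc_left hy ht)
  rcases le_total x₀ x with hx | hx
  · refine eq_zero_of_norm_le_mul_integral_norm hu (L := |k|⁻¹ * M) (fun y hy => ?_) x
      ⟨hx, le_rfl⟩
    rw [h y, ← intervalIntegral.integral_const_mul]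
    refine intervalIntegral.norm_integral_le_of_norm_le hy.1
      (ae_of_all _ fun t ht => ?_) (hint _ _)
    exact hbound y (Icc_subset_uIcc hy) t (Ioc_subset_Icc_self.trans Icc_subset_uIcc ht)
  · refine eq_zero_of_norm_le_mul_integral_norm_rev hu (L := |k|⁻¹ * M) (fun y hy => ?_) x
      ⟨le_rfl, hx⟩
    rw [h y, intervalIntegral.integral_symm, norm_neg, ← intervalIntegral.integral_const_mul]
    refine intervalIntegral.norm_integral_le_of_norm_le hy.2
      (ae_of_all _ fun t ht => ?_) (hint _ _)
    exact hbound y (Icc_subset_uIcc' hy) t (Ioc_subset_Icc_self.trans Icc_subset_uIcc' ht)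

end SinKernel

theorem existsUnique_eq_mul_add_mul {K : Type*} [Field K] {a₁ a₂ b₁ b₂ : K}
    (hdet : a₁ * b₂ - a₂ * b₁ ≠ 0) (a b : K) :
    ∃! d : K × K, a = d.1 * a₁ + d.2 * a₂ ∧ b = d.1 * b₁ + d.2 * b₂ := by
  refine ⟨((a * b₂ - a₂ * b) / (a₁ * b₂ - a₂ * b₁), (a₁ * b - a * b₁) / (a₁ * b₂ - a₂ * b₁)),
    ⟨?_, ?_⟩, fun d ⟨ha, hb⟩ => ?_⟩
  · rw [div_mul_eq_mul_div, div_mul_eq_mul_div, ← add_div, eq_div_iff hdet]; ring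
  · rw [div_mul_eq_mul_div, div_mul_eq_mul_div, ← add_div, eq_div_iff hdet]; ring
  · ext
    · rw [eq_div_iff hdet]; linear_combination a₂ * hb - b₂ * ha
    · rw [eq_div_iff hdet]; linear_combination b₁ * ha - a₁ * hb

theorem eq_zero_of_forall_mul_exp_add_mul_exp_eq_zero {k : ℝ} (hk : k ≠ 0) {a b : ℂ}
    (h : ∀ x : ℝ, a * exp (I * k * x) + b * exp (-(I * k * x)) = 0) : a = 0 ∧ b = 0 := by
  have h₀ := h 0
  have h₁ := h (Real.pi / (2 * k))
  have harg : I * k * ((Real.pi / (2 * k) : ℝ) : ℂ) = (Real.pi / 2 : ℝ) * I := by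
    have hk' : (k : ℂ) ≠ 0 := by exact_mod_cast hk
    push_cast
    field_simp
  rw [harg, ← neg_mul, ← ofReal_neg, exp_mul_I, exp_mul_I, ← ofReal_cos, ← ofReal_sin,
    ← ofReal_cos, ← ofReal_sin, Real.cos_neg, Real.sin_neg, Real.cos_pi_div_two,
    Real.sin_pi_div_two] at h₁
  simp only [ofReal_zero, ofReal_one, ofReal_neg, mul_zero, zero_add, mul_one, exp_zero,
    neg_zero] at h₀ h₁
  have ha : a = 0 := by
    have : 2 * I * a = 0 := by linear_combination h₁ + I * h₀
    simpa [I_ne_zero] using this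
  exact ⟨ha, by linear_combination h₀ - ha⟩

def IsVolterraSolution (k x₀ : ℝ) (q u : ℝ → ℂ) (a b : ℂ) : Prop :=
  ∀ x : ℝ, u x = a * exp (I * k * x) + b * exp (-(I * k * x)) +
    ∫ t in x₀..x, sinKernel k x t * q t * u t

namespace IsVolterraSolution

variable {k x₀ : ℝ} {q u u₁ u₂ : ℝ → ℂ} {a b a₁ b₁ a₂ b₂ : ℂ}

theorem sub_linear_combination (hq : Continuous q) (hu : Continuous u) (hu₁ : Continuous u₁)
    (hu₂ : Continuous u₂) (h : IsVolterraSolution k x₀ q u a b)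
    (h₁ : IsVolterraSolution k x₀ q u₁ a₁ b₁) (h₂ : IsVolterraSolution k x₀ q u₂ a₂ b₂)
    (c₁ c₂ : ℂ) :
    IsVolterraSolution k x₀ q (fun x => u x - (c₁ * u₁ x + c₂ * u₂ x))
      (a - (c₁ * a₁ + c₂ * a₂)) (b - (c₁ * b₁ + c₂ * b₂)) := by
  intro x
  have hint (v : ℝ → ℂ) (hv : Continuous v) :
      IntervalIntegrable (fun t => sinKernel k x t * q t * v t) volume x₀ x :=
    ((continuous_sinKernel k x).mul hq |>.mul hv).intervalIntegrable _ _
  have hsplit : (∫ t in x₀..x, sinKernel k x t * q t * (u t - (c₁ * u₁ t + c₂ * u₂ t))) =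
      (∫ t in x₀..x, sinKernel k x t * q t * u t) -
        (c₁ * (∫ t in x₀..x, sinKernel k x t * q t * u₁ t) +
          c₂ * ∫ t in x₀..x, sinKernel k x t * q t * u₂ t) := by
    rw [← intervalIntegral.integral_const_mul, ← intervalIntegral.integral_const_mul,
      ← intervalIntegral.integral_add ((hint u₁ hu₁).const_mul _) ((hint u₂ hu₂).const_mul _),
      ← intervalIntegral.integral_sub (hint u hu)
        (((hint u₁ hu₁).const_mul _).add ((hint u₂ hu₂).const_mul _))]
    congr 1 with t
    ring
  dsimp only
  rw [hsplit, h x, h₁ x, h₂ x]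
  ring

theorem forall_eq_zero_iff (hk : k ≠ 0) (hq : Continuous q) (hu : Continuous u)
    (h : IsVolterraSolution k x₀ q u a b) : (∀ x, u x = 0) ↔ a = 0 ∧ b = 0 := by
  refine ⟨fun hu₀ => eq_zero_of_forall_mul_exp_add_mul_exp_eq_zero hk fun x => ?_,
    fun ⟨ha, hb⟩ => eq_zero_of_eq_volterra hq hu fun x => by simpa [ha, hb] using h x⟩
  simpa [hu₀] using (h x).symm

theorem existsUnique_linear_combination (hk : k ≠ 0) (hq : Continuous q) (hu : Continuous u)
    (hu₁ : Continuous u₁) (hu₂ : Continuous u₂) (h : IsVolterraSolution k x₀ q u a b)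
    (h₁ : IsVolterraSolution k x₀ q u₁ a₁ b₁) (h₂ : IsVolterraSolution k x₀ q u₂ a₂ b₂)
    (hdet : a₁ * b₂ - a₂ * b₁ ≠ 0) :
    ∃! d : ℂ × ℂ, ∀ x, u x = d.1 * u₁ x + d.2 * u₂ x := by
  have key (d : ℂ × ℂ) : (∀ x, u x = d.1 * u₁ x + d.2 * u₂ x) ↔
      a = d.1 * a₁ + d.2 * a₂ ∧ b = d.1 * b₁ + d.2 * b₂ := by
    simpa only [sub_eq_zero] using
      (h.sub_linear_combination hq hu hu₁ hu₂ h₁ h₂ d.1 d.2).forall_eq_zero_iff hk hq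
        (by fun_prop)
  simpa only [key] using existsUnique_eq_mul_add_mul hdet a b

end IsVolterraSolution

noncomputable def tailCoeff (k : ℝ) (s : Set ℝ) (w : ℝ → ℂ) : ℂ :=
  ∫ t in s, exp (-(I * k * t)) / (2 * I * k) * w t

section TailCoeff

variable {k : ℝ} {w : ℝ → ℂ}

theorem norm_exp_neg_I_mul (k t : ℝ) : ‖exp (-(I * k * t))‖ = 1 := by
  rw [show -(I * k * t) = ((-(k * t) : ℝ) : ℂ) * I by push_cast; ring]
  exact norm_exp_ofReal_mul_I _

theorem integrable_sinKernel_mul (hw : Integrable w) (x : ℝ) :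
    Integrable fun t => sinKernel k x t * w t :=
  hw.bdd_mul (continuous_sinKernel k x).aestronglyMeasurable
    (ae_of_all _ (norm_sinKernel_le k x))

theorem integrable_exp_div_mul (hw : Integrable w) (k : ℝ) :
    Integrable fun t : ℝ => exp (-(I * k * t)) / (2 * I * k) * w t :=
  hw.bdd_mul (by fun_prop) (c := ‖2 * I * (k : ℂ)‖⁻¹) (ae_of_all _ fun t => by
    rw [norm_div, norm_exp_neg_I_mul, one_div])

theorem setIntegral_sinKernel_mul (hk : k ≠ 0) (hw : Integrable w) (s : Set ℝ) (x : ℝ) :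
    ∫ t in s, sinKernel k x t * w t =
      exp (I * k * x) * tailCoeff k s w + exp (-(I * k * x)) * tailCoeff (-k) s w := by
  rw [tailCoeff, tailCoeff, ← integral_const_mul, ← integral_const_mul,
    ← integral_add ((integrable_exp_div_mul hw k).const_mul _).integrableOn
      ((integrable_exp_div_mul hw (-k)).const_mul _).integrableOn]
  congr 1 with t
  rw [sinKernel_eq_exp hk]
  ring

theorem norm_tailCoeff_lt_half (hk : k ≠ 0) {s : Set ℝ} (hs : ∫ t in s, ‖w t‖ < |k|) :
    ‖tailCoeff k s w‖ < 1 / 2 := by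
  have hnorm (t : ℝ) : ‖exp (-(I * k * t)) / (2 * I * k) * w t‖ = ‖w t‖ / (2 * |k|) := by
    simp [norm_exp_neg_I_mul, div_mul_eq_mul_div]
  calc ‖tailCoeff k s w‖ ≤ ∫ t in s, ‖w t‖ / (2 * |k|) := by
        rw [tailCoeff]
        simpa only [hnorm] using norm_integral_le_integral_norm
          (μ := volume.restrict s) fun t => exp (-(I * k * t)) / (2 * I * k) * w t
    _ = (∫ t in s, ‖w t‖) / (2 * |k|) := integral_div _ _
    _ < 1 / 2 := by
        rw [div_lt_iff₀ (by positivity)]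
        linarith

end TailCoeff

namespace IsVolterraSolution

variable {k : ℝ} {q u : ℝ → ℂ} {a b : ℂ}

theorem of_integral_Iic (hk : k ≠ 0) (hw : Integrable fun t => q t * u t)
    (h : ∀ x, u x = a * exp (I * k * x) + b * exp (-(I * k * x)) +
      ∫ t in Iic x, sinKernel k x t * q t * u t) (x₀ : ℝ) :
    IsVolterraSolution k x₀ q u (a + tailCoeff k (Iic x₀) fun t => q t * u t)
      (b + tailCoeff (-k) (Iic x₀) fun t => q t * u t) := by
  intro x
  have hassoc : (fun t => sinKernel k x t * q t * u t) = fun t => sinKernel k x t * (q t * u t) :=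
    funext fun t => mul_assoc _ _ _
  have hint := integrable_sinKernel_mul (k := k) hw x
  have hsplit := intervalIntegral.integral_Iic_sub_Iic hint.integrableOn hint.integrableOn
    (a := x₀) (b := x)
  rw [h x, hassoc, ← hsplit, setIntegral_sinKernel_mul hk hw (Iic x₀)]
  ring

theorem of_integral_Ici (hk : k ≠ 0) (hw : Integrable fun t => q t * u t)
    (h : ∀ x, u x = a * exp (I * k * x) + b * exp (-(I * k * x)) -
      ∫ t in Ici x, sinKernel k x t * q t * u t) (x₀ : ℝ) :
    IsVolterraSolution k x₀ q u (a - tailCoeff k (Ici x₀) fun t => q t * u t)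
      (b - tailCoeff (-k) (Ici x₀) fun t => q t * u t) := by
  intro x
  have hassoc : (fun t => sinKernel k x t * q t * u t) = fun t => sinKernel k x t * (q t * u t) :=
    funext fun t => mul_assoc _ _ _
  have hint := integrable_sinKernel_mul (k := k) hw x
  have hsplit := intervalIntegral.integral_Ici_sub_Ici' hint.integrableOn hint.integrableOn
    (a := x₀) (b := x)
  rw [h x, hassoc, ← hsplit, setIntegral_sinKernel_mul hk hw (Ici x₀)]
  ring

end IsVolterraSolution

theorem mul_sub_one_add_mul_one_add_ne_zero {𝕜 : Type*} [NormedField 𝕜] {α β γ δ : 𝕜}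
    (hα : ‖α‖ < 1 / 2) (hβ : ‖β‖ < 1 / 2) (hγ : ‖γ‖ < 1 / 2) (hδ : ‖δ‖ < 1 / 2) :
    α * δ - (1 + β) * (1 + γ) ≠ 0 := by
  have hone_add (ε : 𝕜) (hε : ‖ε‖ < 1 / 2) : 1 / 2 < ‖1 + ε‖ := by
    have := norm_sub_norm_le (1 : 𝕜) (-ε)
    rw [norm_one, norm_neg, sub_neg_eq_add] at this
    linarith
  rw [sub_ne_zero]
  refine fun h => (?_ : ‖α * δ‖ < ‖(1 + β) * (1 + γ)‖).ne (congrArg _ h)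
  rw [norm_mul, norm_mul]
  calc ‖α‖ * ‖δ‖ ≤ 1 / 2 * (1 / 2) := by gcongr
    _ < ‖1 + β‖ * ‖1 + γ‖ := by nlinarith [hone_add β hβ, hone_add γ hγ]

/-- Theorem 2, second relation: the right Jost solution `f₊(k,·)` is a unique linear
combination of the left Jost solutions `f₋(k,·)` and `f₋(−k,·)`; this is the relation
`s₁₁ f₊ = s₁₂ f₋ + f₋(−k,·)` after normalization. -/
theorem right_jost_combination_of_left (q : ℝ → ℂ) (hq : Continuous q)
    (hq' : Integrable (fun x => (1 + |x|) * ‖q x‖)) (k : ℝ) (hk : k ≠ 0)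
    (fmk fmmk fpk : ℝ → ℂ)
    (hfmk : Continuous fmk) (hfmkb : ∃ C : ℝ, ∀ x, ‖fmk x‖ ≤ C)
    (hfmkeq : ∀ x : ℝ, fmk x = Complex.exp (-(Complex.I * k * x)) +
        ∫ t in Set.Iic x, ((Real.sin (k * (x - t)) / k : ℝ) : ℂ) * q t * fmk t)
    (hfmmk : Continuous fmmk) (hfmmkb : ∃ C : ℝ, ∀ x, ‖fmmk x‖ ≤ C)
    (hfmmkeq : ∀ x : ℝ, fmmk x = Complex.exp (-(Complex.I * (-k) * x)) +
        ∫ t in Set.Iic x, ((Real.sin ((-k) * (x - t)) / (-k) : ℝ) : ℂ) * q t * fmmk t)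
    (hfpk : Continuous fpk) (hfpkb : ∃ C : ℝ, ∀ x, ‖fpk x‖ ≤ C)
    (hfpkeq : ∀ x : ℝ, fpk x = Complex.exp (Complex.I * k * x) -
        ∫ t in Set.Ici x, ((Real.sin (k * (x - t)) / k : ℝ) : ℂ) * q t * fpk t) :
    ∃! d : ℂ × ℂ, ∀ x : ℝ, fpk x = d.1 * fmk x + d.2 * fmmk x := by
  have hqi : Integrable q := hq'.mono' hq.aestronglyMeasurable
    (ae_of_all _ fun x => le_mul_of_one_le_left (norm_nonneg _) (by simp))
  have hw (u : ℝ → ℂ) (hu : Continuous u) (hub : ∃ C : ℝ, ∀ x, ‖u x‖ ≤ C) :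
      Integrable fun t => q t * u t :=
    let ⟨_, hC⟩ := hub; hqi.mul_bdd hu.aestronglyMeasurable (ae_of_all _ hC)
  have h₁ := IsVolterraSolution.of_integral_Iic (a := 0) (b := 1) hk (hw fmk hfmk hfmkb)
    fun x => by rw [zero_mul, one_mul, zero_add]; exact hfmkeq x
  have h₂ := IsVolterraSolution.of_integral_Iic (a := 1) (b := 0) hk (hw fmmk hfmmk hfmmkb)
    fun x => by
      rw [one_mul, zero_mul, add_zero, hfmmkeq x, show -(I * -(k : ℂ) * x) = I * k * x by ring]
      simp only [← sinKernel_neg k x]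
      rfl
  have h := IsVolterraSolution.of_integral_Ici (a := 1) (b := 0) hk (hw fpk hfpk hfpkb)
    fun x => by rw [one_mul, zero_mul, add_zero]; exact hfpkeq x
  have hsmall (u : ℝ → ℂ) : ∀ᶠ x₀ in Filter.atBot, ∫ t in Iic x₀, ‖q t * u t‖ < |k| :=
    (tendsto_integral_Iic_zero Filter.tendsto_id).eventually (gt_mem_nhds (abs_pos.2 hk))
  obtain ⟨x₀, hx₁, hx₂⟩ := ((hsmall fmk).and (hsmall fmmk)).exists
  refine (h x₀).existsUnique_linear_combination hk hq hfpk hfmk hfmmk (h₁ x₀) (h₂ x₀) ?_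
  simp only [zero_add]
  exact mul_sub_one_add_mul_one_add_ne_zero (norm_tailCoeff_lt_half hk hx₁)
    (norm_tailCoeff_lt_half hk hx₂) (norm_tailCoeff_lt_half (neg_ne_zero.2 hk) (by rwa [abs_neg]))
    (norm_tailCoeff_lt_half (neg_ne_zero.2 hk) (by rwa [abs_neg]))
end
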